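/- For every t ∈ k one has the vector identity w(t + 1) = w(t) + w'(t) in k^4, where w(t) = (1, t, t^2 − t^p, t^3 + 2t^p − 3t^{p+1}) and w'(t) = (0, 1, 2t, 3t^2 − 3t^p) is its coordinatewise derivative. (This is the identity underlying Esteves–Homma's example: the point of parameter t + 1 of the curve (1 : t : t^2 − t^p : t^3 + 2t^p − 3t^{p+1}) in P^3 lies on the tangent line at the point of parameter t.) -/
import Mathlib


/-- Esteves–Homma's curve `(1 : t : t² − t^p : t³ + 2t^p − 3t^{p+1})` in `P³`. -/
def ehVec {k : Type*} [Field k] (p : ℕ) (t : k) : Fin 4 → k :=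
  ![1, t, t ^ 2 - t ^ p, t ^ 3 + 2 * t ^ p - 3 * t ^ (p + 1)]

/-- The coordinatewise derivative of `ehVec`. -/
def ehVec' {k : Type*} [Field k] (p : ℕ) (t : k) : Fin 4 → k :=
  ![0, 1, 2 * t, 3 * t ^ 2 - 3 * t ^ p]

theorem stmt15 (k : Type*) [Field k] (p : ℕ) [CharP k p] (hp : 0 < p) (t : k) :
    ehVec p (t + 1) = ehVec p t + ehVec' p t := by
  haveI : NeZero p := ⟨hp.ne'⟩
  haveI : Fact p.Prime := ⟨CharP.char_is_prime_of_pos k p |>.out⟩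
  have hfrob : (t + 1) ^ p = t ^ p + 1 := by
    rw [add_pow_char, one_pow]
  funext i
  fin_cases i <;>
    simp [ehVec, ehVec', pow_succ, hfrob] <;> ring
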